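/- arXiv:2502.18656 — 4 statements merged into one kernel-verified Lean document; each statement's English description precedes it below -/
import Mathlib

section
/- Let d ≥ 3 be odd and let i ≠ j be elements of {0,…,d−1}. Define μ_S(i) = −1 if i ∈ S and μ_S(i) = 1 otherwise. Then the sum of μ_S(i)·μ_S(j) over all subsets S of {0,…,d−1} with |S| < d/2 equals 0. -/
/-- μ_S(i) = -1 if i ∈ S and 1 otherwise. -/
def mu {d : ℕ} (S : Finset (Fin d)) (i : Fin d) : ℤ := if i ∈ S then -1 else 1

theorem sum_mu_mul_mu (d : ℕ) (hd : Odd d) (hd3 : 3 ≤ d) (i j : Fin d) (hij : i ≠ j) :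
    ∑ S ∈ Finset.univ.filter (fun S : Finset (Fin d) => 2 * S.card < d),
      mu S i * mu S j = 0 := by
  classical
  have hcard : ∀ S : Finset (Fin d), S.card ≤ d := fun S => by
    simpa using Finset.card_le_univ S
  have hji : j ≠ i := hij.symm
  -- total sum over all subsets is 0
  have htot : ∑ S : Finset (Fin d), mu S i * mu S j = 0 := by
    apply Finset.sum_ninvolution (fun S => if i ∈ S then S.erase i else insert i S)
    · intro S
      by_cases h : i ∈ S <;> by_cases hj : j ∈ S <;>
        simp [mu, h, hj, Finset.mem_erase, Finset.mem_insert, hij, hji]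
    · intro S _
      by_cases h : i ∈ S
      · simp only [h, if_true]
        intro hEq
        have hne := Finset.notMem_erase i S
        rw [hEq] at hne
        exact hne h
      · simp only [h, if_false]
        intro hEq
        have hm := Finset.mem_insert_self i S
        rw [hEq] at hm
        exact h hm
    · intro S; exact Finset.mem_univ _
    · intro S
      by_cases h : i ∈ S
      · simp [h, Finset.insert_erase h, Finset.mem_erase]
      · simp [h, Finset.erase_insert h]
  -- compl bijection between big and small
  have hbij : ∑ S ∈ Finset.univ.filter (fun S : Finset (Fin d) => d < 2 * S.card),
      mu S i * mu S j
      = ∑ S ∈ Finset.univ.filter (fun S : Finset (Fin d) => 2 * S.card < d),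
      mu S i * mu S j := by
    apply Finset.sum_nbij' (fun S => Sᶜ) (fun S => Sᶜ)
    · intro S hS
      simp only [Finset.mem_filter, Finset.mem_univ, true_and] at hS ⊢
      rw [Finset.card_compl, Fintype.card_fin]
      have := hcard S
      omega
    · intro S hS
      simp only [Finset.mem_filter, Finset.mem_univ, true_and] at hS ⊢
      rw [Finset.card_compl, Fintype.card_fin]
      have := hcard S
      omega
    · intro S _; simp
    · intro S _; simp
    · intro S _
      by_cases h : i ∈ S <;> by_cases hj : j ∈ S <;>
        simp [mu, h, hj, Finset.mem_compl]
  -- split total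
  have hsplit : ∑ S : Finset (Fin d), mu S i * mu S j
      = (∑ S ∈ Finset.univ.filter (fun S : Finset (Fin d) => 2 * S.card < d),
          mu S i * mu S j)
      + ∑ S ∈ Finset.univ.filter (fun S : Finset (Fin d) => d < 2 * S.card),
          mu S i * mu S j := by
    rw [← Finset.sum_filter_add_sum_filter_not Finset.univ
      (fun S : Finset (Fin d) => 2 * S.card < d)]
    congr 1
    apply Finset.sum_congr _ (fun _ _ => rfl)
    apply Finset.filter_congr
    intro S _
    obtain ⟨k, hk⟩ := hd
    simp only [not_lt]
    constructor <;> intro h <;> omega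
  rw [htot, hbij] at hsplit
  linarith
end

section
/- Let d ≥ 5 be odd and let i, j, i', j' be four distinct elements of {0,…,d−1}. With μ_S(i) = −1 if i ∈ S and 1 otherwise, the sum of μ_S(i)·μ_S(j)·μ_S(i')·μ_S(j') over all subsets S of {0,…,d−1} with |S| < d/2 equals 0. -/
lemma mu_symmDiff_self {d : ℕ} (S : Finset (Fin d)) (i : Fin d) :
    mu (symmDiff S {i}) i = - mu S i := by
  by_cases h : i ∈ S <;> simp [mu, Finset.mem_symmDiff, h]

lemma mu_symmDiff_ne {d : ℕ} (S : Finset (Fin d)) {i k : Fin d} (h : k ≠ i) :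
    mu (symmDiff S {i}) k = mu S k := by
  by_cases hk : k ∈ S <;> simp [mu, Finset.mem_symmDiff, hk, h]

lemma mu_compl {d : ℕ} (S : Finset (Fin d)) (i : Fin d) :
    mu Sᶜ i = - mu S i := by
  by_cases h : i ∈ S <;> simp [mu, h]

theorem sum_mu_four (d : ℕ) (hd : Odd d) (hd5 : 5 ≤ d) (i j i' j' : Fin d)
    (h1 : i ≠ j) (h2 : i ≠ i') (h3 : i ≠ j') (h4 : j ≠ i') (h5 : j ≠ j') (h6 : i' ≠ j') :
    ∑ S ∈ Finset.univ.filter (fun S : Finset (Fin d) => 2 * S.card < d),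
      mu S i * mu S j * mu S i' * mu S j' = 0 := by
  set f : Finset (Fin d) → ℤ := fun S => mu S i * mu S j * mu S i' * mu S j' with hf
  have htot : ∑ S : Finset (Fin d), f S = 0 := by
    refine Finset.sum_involution (fun S _ => symmDiff S {i}) ?_ ?_ (fun S _ => Finset.mem_univ _) ?_
    · intro S _
      simp only [hf, mu_symmDiff_self, mu_symmDiff_ne S h1.symm,
        mu_symmDiff_ne S h2.symm, mu_symmDiff_ne S h3.symm]
      ring
    · intro S _ hne
      intro heq
      have : i ∈ symmDiff S {i} ↔ i ∈ S := by
        rw [show symmDiff S {i} = S from heq]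
      by_cases h : i ∈ S <;> simp [Finset.mem_symmDiff, h] at this
    · intro S _
      ext k
      by_cases h : k ∈ S <;> by_cases hk : k = i <;>
        simp [Finset.mem_symmDiff, h, hk]
  have hsplit := Finset.sum_filter_add_sum_filter_not Finset.univ
    (fun S : Finset (Fin d) => 2 * S.card < d) f
  have heq : ∑ S ∈ Finset.univ.filter (fun S : Finset (Fin d) => ¬ 2 * S.card < d), f S
      = ∑ S ∈ Finset.univ.filter (fun S : Finset (Fin d) => 2 * S.card < d), f S := by
    refine Finset.sum_bij' (fun S _ => Sᶜ) (fun S _ => Sᶜ) ?_ ?_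
      (fun S _ => compl_compl S) (fun S _ => compl_compl S) ?_
    · intro S hS
      simp only [Finset.mem_filter, Finset.mem_univ, true_and] at hS ⊢
      have hc : Sᶜ.card = d - S.card := by
        rw [Finset.card_compl, Fintype.card_fin]
      have hle : S.card ≤ d := by
        simpa using Finset.card_le_card (Finset.subset_univ S)
      obtain ⟨m, hm⟩ := hd
      omega
    · intro S hS
      simp only [Finset.mem_filter, Finset.mem_univ, true_and] at hS ⊢
      have hc : Sᶜ.card = d - S.card := by
        rw [Finset.card_compl, Fintype.card_fin]
      have hle : S.card ≤ d := by
        simpa using Finset.card_le_card (Finset.subset_univ S)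
      obtain ⟨m, hm⟩ := hd
      omega
    · intro S _
      simp only [hf, mu_compl]
      ring
  have hsum : ∑ S ∈ Finset.univ.filter (fun S : Finset (Fin d) => 2 * S.card < d), f S
      + ∑ S ∈ Finset.univ.filter (fun S : Finset (Fin d) => 2 * S.card < d), f S = 0 := by
    rw [heq] at hsplit
    linarith [hsplit, htot]
  linarith [hsum]
end

section
/- Let ρ₀, ρ₁ be density operators on ℂ^{d_A} ⊗ ℂ^{d_B}, η₀, η₁ ≥ 0 with η₀ + η₁ = 1, and Λ = η₀ρ₀ − η₁ρ₁. If H is a Hermitian operator with H + H^Γ = Λ (Γ the partial transpose), then for every PPT measurement {M₀, M₁} (M₀, M₁ ⪰ 0, M₀^Γ, M₁^Γ ⪰ 0, M₀ + M₁ = 1), one has η₀ Tr(ρ₀M₀) + η₁ Tr(ρ₁M₁) ≤ 1/2 + Tr|H|. -/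
open Matrix ComplexOrder

/-- Partial transposition on the second tensor factor. -/
def ptrans {a b : Type*} (M : Matrix (a × b) (a × b) ℂ) : Matrix (a × b) (a × b) ℂ :=
  fun p q => M (p.1, q.2) (q.1, p.2)

/-- The trace norm Tr|H| = Tr √(Hᴴ H). -/
noncomputable def trN {n : Type*} [Fintype n] [DecidableEq n] (H : Matrix n n ℂ) : ℝ :=
  (((Matrix.posSemidef_conjTranspose_mul_self H).1.eigenvectorUnitary.1 *
      diagonal (((↑) : ℝ → ℂ) ∘ Real.sqrt ∘ (Matrix.posSemidef_conjTranspose_mul_self H).1.eigenvalues) *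
      (star (Matrix.posSemidef_conjTranspose_mul_self H).1.eigenvectorUnitary : Matrix n n ℂ)).trace).re

/-!
With `Λ = η₀ρ₀ - η₁ρ₁`, the success probability of `{M₀, M₁}` equals `1/2 + Tr(Λ(M₀ - M₁))/2`.
Since `Tr(H^Γ X) = Tr(H X^Γ)`, the hypothesis `H + H^Γ = Λ` splits `Tr(Λ(M₀ - M₁))` into
`Tr(H(M₀ - M₁)) + Tr(H(M₀^Γ - M₁^Γ))`. PPT-ness makes both `{M₀, M₁}` and `{M₀^Γ, M₁^Γ}`
two-outcome measurements, and for any such `{N₀, N₁}` the Loewner bounds `±H ≤ |H|` give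
`Tr(H(N₀ - N₁)) ≤ Tr(|H|N₀) + Tr(|H|N₁) = Tr|H|`.
-/

section CFCAbs

variable {A : Type*} [NonUnitalRing A] [StarRing A] [TopologicalSpace A] [Module ℝ A]
  [SMulCommClass ℝ A A] [IsScalarTower ℝ A A] [NonUnitalContinuousFunctionalCalculus ℝ A IsSelfAdjoint]
  [PartialOrder A] [StarOrderedRing A] [NonnegSpectrumClass ℝ A] [IsTopologicalRing A] [T2Space A]

lemma IsSelfAdjoint.le_cfcAbs {a : A} (ha : IsSelfAdjoint a) : a ≤ CFC.abs a := by
  rw [← sub_nonneg, CFC.abs_sub_self a ha]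
  exact nsmul_nonneg (CFC.negPart_nonneg a) 2

lemma IsSelfAdjoint.neg_le_cfcAbs {a : A} (ha : IsSelfAdjoint a) : -a ≤ CFC.abs a := by
  rw [neg_le_iff_add_nonneg, CFC.abs_add_self a ha]
  exact nsmul_nonneg (CFC.posPart_nonneg a) 2

end CFCAbs

open scoped MatrixOrder

namespace Matrix

variable {n : Type*} [Fintype n] [DecidableEq n]

lemma trN_eq_re_trace_abs (H : Matrix n n ℂ) : trN H = (CFC.abs H).trace.re := by
  have hH := Matrix.posSemidef_conjTranspose_mul_self H
  have hsqrt : (fun x : ℝ => ((NNReal.sqrt x.toNNReal : NNReal) : ℝ)) = Real.sqrt :=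
    funext fun x => by rw [Real.sqrt]
  rw [CFC.abs, CFC.sqrt_eq_cfc, star_eq_conjTranspose, cfc_nnreal_eq_real _ _ hH.nonneg,
    hH.1.cfc_eq, trN, IsHermitian.cfc, Unitary.conjStarAlgAut_apply, hsqrt]
  rfl

lemma PosSemidef.re_trace_mul_nonneg {A B : Matrix n n ℂ} (hA : A.PosSemidef) (hB : B.PosSemidef) :
    0 ≤ ((A * B).trace).re := by
  have hsq : CFC.sqrt A * CFC.sqrt A = A := CFC.sqrt_mul_sqrt_self A hA.nonneg
  have hconj : (CFC.sqrt A * B * CFC.sqrt A).PosSemidef := by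
    simpa only [(CFC.sqrt_nonneg A).posSemidef.isHermitian.eq] using
      hB.mul_mul_conjTranspose_same (CFC.sqrt A)
  rw [← hsq, Matrix.mul_assoc, trace_mul_comm]
  exact (Complex.nonneg_iff.mp hconj.trace_nonneg).1

lemma re_trace_mul_le_of_le {A B N : Matrix n n ℂ} (hAB : A ≤ B) (hN : N.PosSemidef) :
    ((A * N).trace).re ≤ ((B * N).trace).re := by
  have := PosSemidef.re_trace_mul_nonneg (Matrix.le_iff.mp hAB) hN
  rwa [Matrix.sub_mul, trace_sub, Complex.sub_re, sub_nonneg] at this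

lemma trace_mul_add_trace_mul {R : Type*} [Semiring R] {A N₀ N₁ : Matrix n n R} (hN : N₀ + N₁ = 1) :
    (A * N₀).trace + (A * N₁).trace = A.trace := by
  rw [← trace_add, ← Matrix.mul_add, hN, Matrix.mul_one]

lemma IsHermitian.re_trace_mul_sub_le_trN {H N₀ N₁ : Matrix n n ℂ} (hH : H.IsHermitian)
    (hN₀ : N₀.PosSemidef) (hN₁ : N₁.PosSemidef) (hN : N₀ + N₁ = 1) :
    ((H * (N₀ - N₁)).trace).re ≤ trN H := by
  have h₀ := re_trace_mul_le_of_le hH.isSelfAdjoint.le_cfcAbs hN₀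
  have h₁ := re_trace_mul_le_of_le hH.isSelfAdjoint.neg_le_cfcAbs hN₁
  have htr := congrArg Complex.re (trace_mul_add_trace_mul (A := CFC.abs H) hN)
  simp only [Matrix.mul_sub, Matrix.neg_mul, trace_sub, trace_neg, Complex.sub_re,
    Complex.neg_re, Complex.add_re] at h₁ htr ⊢
  rw [trN_eq_re_trace_abs]
  linarith

lemma guessing_probability_eq_half_add {ρ₀ ρ₁ M₀ M₁ : Matrix n n ℂ}
    (hρ₀ : ρ₀.trace = 1) (hρ₁ : ρ₁.trace = 1) {η₀ η₁ : ℝ} (hη : η₀ + η₁ = 1)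
    (hM : M₀ + M₁ = 1) :
    η₀ * ((ρ₀ * M₀).trace).re + η₁ * ((ρ₁ * M₁).trace).re =
      1 / 2 + (((η₀ : ℂ) • ρ₀ - (η₁ : ℂ) • ρ₁) * (M₀ - M₁)).trace.re / 2 := by
  have h₀ := congrArg Complex.re (trace_mul_add_trace_mul (A := ρ₀) hM)
  have h₁ := congrArg Complex.re (trace_mul_add_trace_mul (A := ρ₁) hM)
  rw [hρ₀] at h₀
  rw [hρ₁] at h₁
  simp only [Matrix.sub_mul, Matrix.mul_sub, Matrix.smul_mul, trace_sub, trace_smul,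
    Complex.add_re, Complex.sub_re, Complex.one_re, smul_eq_mul, Complex.re_ofReal_mul]
    at h₀ h₁ ⊢
  linear_combination (η₀ * h₀ + η₁ * h₁ + hη) / 2

end Matrix

section PartialTranspose

variable {a b : Type*}

lemma ptrans_add (M N : Matrix (a × b) (a × b) ℂ) : ptrans (M + N) = ptrans M + ptrans N := rfl

lemma ptrans_sub (M N : Matrix (a × b) (a × b) ℂ) : ptrans (M - N) = ptrans M - ptrans N := rfl

lemma ptrans_one [DecidableEq a] [DecidableEq b] :
    ptrans (1 : Matrix (a × b) (a × b) ℂ) = 1 := by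
  ext ⟨i, j⟩ ⟨k, l⟩
  simp only [ptrans, one_apply, Prod.mk.injEq]
  by_cases hik : i = k <;> by_cases hjl : j = l <;> simp [hik, hjl, eq_comm]

lemma trace_ptrans_mul [Fintype a] [Fintype b] (H M : Matrix (a × b) (a × b) ℂ) :
    (ptrans H * M).trace = (H * ptrans M).trace := by
  simp only [trace, diag, mul_apply, ← Fintype.sum_prod_type']
  exact Fintype.sum_equiv
    (Function.Involutive.toPerm (fun x => ((x.1.1, x.2.2), (x.2.1, x.1.2))) fun _ => rfl)
    _ _ fun _ => rfl

end PartialTranspose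

theorem ppt_guessing_bound_general {a b : Type*} [Fintype a] [Fintype b]
    [DecidableEq a] [DecidableEq b]
    (ρ₀ ρ₁ : Matrix (a × b) (a × b) ℂ)
    (hρ₀t : ρ₀.trace = 1) (hρ₁t : ρ₁.trace = 1)
    (η₀ η₁ : ℝ) (hη : η₀ + η₁ = 1)
    (H : Matrix (a × b) (a × b) ℂ) (hH : H.IsHermitian)
    (hHΛ : H + ptrans H = (η₀ : ℂ) • ρ₀ - (η₁ : ℂ) • ρ₁)
    (M₀ M₁ : Matrix (a × b) (a × b) ℂ)
    (hM₀ : M₀.PosSemidef) (hM₁ : M₁.PosSemidef)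
    (hM₀pt : (ptrans M₀).PosSemidef) (hM₁pt : (ptrans M₁).PosSemidef)
    (hM : M₀ + M₁ = 1) :
    η₀ * ((ρ₀ * M₀).trace).re + η₁ * ((ρ₁ * M₁).trace).re ≤ 1 / 2 + trN H := by
  have hMΓ : ptrans M₀ + ptrans M₁ = 1 := by rw [← ptrans_add, hM, ptrans_one]
  have hsplit : ((H + ptrans H) * (M₀ - M₁)).trace =
      (H * (M₀ - M₁)).trace + (H * (ptrans M₀ - ptrans M₁)).trace := by
    rw [Matrix.add_mul, trace_add, trace_ptrans_mul, ptrans_sub]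
  rw [guessing_probability_eq_half_add hρ₀t hρ₁t hη hM, ← hHΛ, hsplit, Complex.add_re]
  linarith [hH.re_trace_mul_sub_le_trN hM₀ hM₁ hM, hH.re_trace_mul_sub_le_trN hM₀pt hM₁pt hMΓ]

theorem ppt_guessing_bound {a b : Type*} [Fintype a] [Fintype b]
    [DecidableEq a] [DecidableEq b]
    (ρ₀ ρ₁ : Matrix (a × b) (a × b) ℂ)
    (hρ₀ : ρ₀.PosSemidef) (hρ₁ : ρ₁.PosSemidef)
    (hρ₀t : ρ₀.trace = 1) (hρ₁t : ρ₁.trace = 1)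
    (η₀ η₁ : ℝ) (hη₀ : 0 ≤ η₀) (hη₁ : 0 ≤ η₁) (hη : η₀ + η₁ = 1)
    (H : Matrix (a × b) (a × b) ℂ) (hH : H.IsHermitian)
    (hHΛ : H + ptrans H = (η₀ : ℂ) • ρ₀ - (η₁ : ℂ) • ρ₁)
    (M₀ M₁ : Matrix (a × b) (a × b) ℂ)
    (hM₀ : M₀.PosSemidef) (hM₁ : M₁.PosSemidef)
    (hM₀pt : (ptrans M₀).PosSemidef) (hM₁pt : (ptrans M₁).PosSemidef)
    (hM : M₀ + M₁ = 1) :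
    η₀ * ((ρ₀ * M₀).trace).re + η₁ * ((ρ₁ * M₁).trace).re ≤ 1 / 2 + trN H :=
  ppt_guessing_bound_general ρ₀ ρ₁ hρ₀t hρ₁t η₀ η₁ hη H hH hHΛ M₀ M₁ hM₀ hM₁ hM₀pt hM₁pt hM
end

section
/- In ℂ³ ⊗ ℂ³, the states ρ₀ = (1/4) Σ_{i=0}^{3} |α_i⟩⟨α_i| ⊗ |α_i⟩⟨α_i| and ρ₁ = (1/6) Σ_{i=0}^{2} (|β_i⁺⟩⟨β_i⁺| ⊗ |β_i⁻⟩⟨β_i⁻| + |β_i⁻⟩⟨β_i⁻| ⊗ |β_i⁺⟩⟨β_i⁺|) are orthogonal: Tr(ρ₀ ρ₁) = 0. -/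
open Matrix Kronecker

/-- Rank-one projector |v⟩⟨v|. -/
def proj (v : Fin 3 → ℂ) : Matrix (Fin 3) (Fin 3) ℂ := Matrix.vecMulVec v (star v)

noncomputable def α : Fin 4 → Fin 3 → ℂ :=
  ![((Real.sqrt 3 : ℂ))⁻¹ • ![1, 1, 1], ((Real.sqrt 3 : ℂ))⁻¹ • ![1, -1, -1],
    ((Real.sqrt 3 : ℂ))⁻¹ • ![1, -1, 1], ((Real.sqrt 3 : ℂ))⁻¹ • ![1, 1, -1]]

noncomputable def βp : Fin 3 → Fin 3 → ℂ :=
  ![((Real.sqrt 2 : ℂ))⁻¹ • ![1, 1, 0], ((Real.sqrt 2 : ℂ))⁻¹ • ![0, 1, 1],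
    ((Real.sqrt 2 : ℂ))⁻¹ • ![1, 0, 1]]

noncomputable def βm : Fin 3 → Fin 3 → ℂ :=
  ![((Real.sqrt 2 : ℂ))⁻¹ • ![1, -1, 0], ((Real.sqrt 2 : ℂ))⁻¹ • ![0, 1, -1],
    ((Real.sqrt 2 : ℂ))⁻¹ • ![-1, 0, 1]]


lemma trace_proj_mul (u v : Fin 3 → ℂ) :
    (proj u * proj v).trace = (star u ⬝ᵥ v) * (star v ⬝ᵥ u) := by
  simp [proj, Matrix.trace, Matrix.mul_apply, Matrix.vecMulVec_apply, dotProduct,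
    Fin.sum_univ_succ]
  ring

lemma key (i : Fin 4) (j : Fin 3) :
    (star (α i) ⬝ᵥ βp j) * (star (α i) ⬝ᵥ βm j) = 0 := by
  fin_cases i <;> fin_cases j <;>
    simp [α, βp, βm, dotProduct, Fin.sum_univ_succ, Pi.smul_apply, smul_eq_mul]

lemma key2 (i : Fin 4) (j : Fin 3) :
    ((proj (α i) ⊗ₖ proj (α i)) * (proj (βp j) ⊗ₖ proj (βm j))).trace = 0 := by
  rw [← Matrix.mul_kronecker_mul, Matrix.trace_kronecker, trace_proj_mul, trace_proj_mul]
  linear_combination (star (βp j) ⬝ᵥ α i) * (star (βm j) ⬝ᵥ α i) * key i j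

lemma key2' (i : Fin 4) (j : Fin 3) :
    ((proj (α i) ⊗ₖ proj (α i)) * (proj (βm j) ⊗ₖ proj (βp j))).trace = 0 := by
  rw [← Matrix.mul_kronecker_mul, Matrix.trace_kronecker, trace_proj_mul, trace_proj_mul]
  linear_combination (star (βm j) ⬝ᵥ α i) * (star (βp j) ⬝ᵥ α i) * key i j

noncomputable def ρ₀ : Matrix (Fin 3 × Fin 3) (Fin 3 × Fin 3) ℂ :=
  (4 : ℂ)⁻¹ • ∑ i : Fin 4, proj (α i) ⊗ₖ proj (α i)

noncomputable def ρ₁ : Matrix (Fin 3 × Fin 3) (Fin 3 × Fin 3) ℂ :=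
  (6 : ℂ)⁻¹ • ∑ i : Fin 3, (proj (βp i) ⊗ₖ proj (βm i) + proj (βm i) ⊗ₖ proj (βp i))

theorem rho_orthogonal : (ρ₀ * ρ₁).trace = 0 := by
  simp only [ρ₀, ρ₁, Matrix.smul_mul, Matrix.mul_smul, Matrix.trace_smul, Matrix.sum_mul,
    Matrix.mul_sum, Matrix.mul_add, Matrix.trace_sum, Matrix.trace_add, key2, key2',
    add_zero, smul_zero, Finset.sum_const_zero]
end
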